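/- Let f : ℝᵈ → ℝ be continuously differentiable and bounded below, let α, β ∈ [0,1) satisfy 4α − β < 3, and let (x, m, v) : [0,∞) → ℝᵈ × ℝᵈ × ℝᵈ be a solution of the Adam ODE system with initial condition (x₀, 0, 0), differentiable on (0,∞), such that sup_{t ≥ 0} ‖∇f(x(t))‖ < ∞ and every entry of v(t) is strictly positive for all t > 0. Then lim_{t→∞} m(t) = 0, and consequently lim_{t→∞} ẋ(t) = 0. (Vanishing of the first-moment estimate, the Dirac-measure instance of the step lim_{t→∞} ∫ ‖m‖² dρ_t = 0 in the proof of Theorem 1.) -/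

import Mathlib

open MeasureTheory Filter
open scoped RealInnerProductSpace

/-- The Adam update direction `g_t(m, v)`, defined coordinatewise by
`g_t(m,v)_i = (m_i/(1−e^{−(1−α)t})) / (√(v_i/(1−e^{−(1−β)t})) + ε)`. -/
noncomputable def adamG (α β ε : ℝ) (d : ℕ) (t : ℝ) (m v : EuclideanSpace ℝ (Fin d)) :
    EuclideanSpace ℝ (Fin d) :=
  WithLp.toLp 2 (fun i => (m i / (1 - Real.exp (-(1 - α) * t))) /
    (Real.sqrt (v i / (1 - Real.exp (-(1 - β) * t))) + ε))

/-- Coordinatewise square of a vector. -/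
noncomputable def vsq (d : ℕ) (w : EuclideanSpace ℝ (Fin d)) : EuclideanSpace ℝ (Fin d) :=
  WithLp.toLp 2 (fun i => (w i) ^ 2)

/-! Let `b(t) = 1 - e^{-(1-β)t}` and let `Dᵢ` be the denominator of the `i`-th coordinate of
`g_t(m, v)`. The energy `E = f(x) + η / (2(1-α)) ∑ᵢ mᵢ² / Dᵢ` satisfies
`Ė ≤ -η (1 - (1-β) / (4(1-α) b(t))) ∑ᵢ mᵢ² / Dᵢ`: the cross terms `⟪∇f, g⟫` cancel, and the
only term that can increase `E` comes from the decay of `Dᵢ`, whose relative rate is at most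
`(1-β) / (2 b(t))`. As `b(t) → 1`, the condition `4α - β < 3` makes this rate eventually
bounded below by a positive constant, and since the moving averages `m` and `v` stay bounded,
so do the `Dᵢ`. Hence `Ė ≤ -c ‖m‖²` for large `t`, and `E ≥ inf f` gives `∫ ‖m‖² < ∞`.
The derivative of `‖m‖²` is bounded, so Barbalat's lemma yields `‖m‖² → 0`, and finally
`|g_t(m, v)ᵢ| ≤ |mᵢ| / ((1 - e^{-(1-α)}) ε)` for `t ≥ 1`. -/

open Set Topology

theorem norm_le_max_of_hasDerivAt_smul_sub {E : Type*} [NormedAddCommGroup E] [NormedSpace ℝ E]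
    {u p : ℝ → E} {γ C T t : ℝ} (hγ : 0 ≤ γ)
    (hu : ∀ s ≥ T, HasDerivAt u (γ • (p s - u s)) s) (hp : ∀ s ≥ T, ‖p s‖ ≤ C) (ht : T ≤ t) :
    ‖u t‖ ≤ max ‖u T‖ C := by
  have hexp : ∀ s, HasDerivAt (fun s => Real.exp (γ * s)) (Real.exp (γ * s) * γ) s := fun s =>
    by simpa using ((hasDerivAt_id s).const_mul γ).exp
  -- variation of constants: `‖e^{γs} u(s)‖` grows at rate at most `γ e^{γs} C`
  have hw : ∀ s ≥ T, HasDerivAt (fun s => Real.exp (γ * s) • u s)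
      ((Real.exp (γ * s) * γ) • p s) s := fun s hs =>
    ((hexp s).smul (hu s hs)).congr_deriv (by module)
  have hbound := image_norm_le_of_norm_deriv_right_le_deriv_boundary
    (B := fun s => ‖Real.exp (γ * T) • u T‖ + C * (Real.exp (γ * s) - Real.exp (γ * T)))
    (fun s hs => (hw s hs.1).continuousAt.continuousWithinAt)
    (fun s hs => (hw s hs.1).hasDerivWithinAt) (by simp)
    (fun s => ((hexp s).sub_const _).const_mul C |>.const_add _)
    (fun s hs => by
      rw [norm_smul, Real.norm_of_nonneg (by positivity), mul_comm C]
      exact mul_le_mul_of_nonneg_left (hp s hs.1) (by positivity)) (right_mem_Icc.2 ht)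
  simp only [norm_smul, Real.norm_of_nonneg (Real.exp_pos _).le] at hbound
  have hmono : Real.exp (γ * T) ≤ Real.exp (γ * t) := Real.exp_le_exp.2 (by nlinarith)
  refine le_of_mul_le_mul_left ?_ (Real.exp_pos (γ * t))
  calc Real.exp (γ * t) * ‖u t‖
      ≤ Real.exp (γ * T) * ‖u T‖ + C * (Real.exp (γ * t) - Real.exp (γ * T)) := hbound
    _ ≤ Real.exp (γ * T) * max ‖u T‖ C + max ‖u T‖ C * (Real.exp (γ * t) - Real.exp (γ * T)) :=
        add_le_add (by gcongr; exact le_max_left _ _)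
          (mul_le_mul_of_nonneg_right (le_max_right _ _) (sub_nonneg.2 hmono))
    _ = Real.exp (γ * t) * max ‖u T‖ C := by ring

theorem exists_lipschitzOnWith_norm_sq_of_hasDerivAt_smul_sub {E : Type*}
    [NormedAddCommGroup E] [InnerProductSpace ℝ E] {u p : ℝ → E} {γ C T : ℝ} (hγ : 0 ≤ γ)
    (hu : ∀ s ≥ T, HasDerivAt u (γ • (p s - u s)) s) (hp : ∀ s ≥ T, ‖p s‖ ≤ C) :
    ∃ L, LipschitzOnWith L (fun t => ‖u t‖ ^ 2) (Ici T) := by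
  set M := max ‖u T‖ C
  have hM : 0 ≤ M := (norm_nonneg _).trans (le_max_left _ _)
  refine ⟨(4 * γ * M ^ 2).toNNReal, (convex_Ici T).lipschitzOnWith_of_nnnorm_hasDerivWithin_le
    (fun s hs => (hu s hs).norm_sq.hasDerivWithinAt) fun s hs => ?_⟩
  have hus : ‖u s‖ ≤ M := norm_le_max_of_hasDerivAt_smul_sub hγ hu hp hs
  have hps : ‖p s‖ ≤ M := (hp s hs).trans (le_max_right _ _)
  rw [← NNReal.coe_le_coe, coe_nnnorm, Real.coe_toNNReal _ (by positivity), norm_mul,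
    Real.norm_two]
  calc 2 * ‖⟪u s, γ • (p s - u s)⟫‖ ≤ 2 * (‖u s‖ * (γ * (‖p s‖ + ‖u s‖))) := by
        gcongr
        refine (norm_inner_le_norm _ _).trans (mul_le_mul_of_nonneg_left ?_ (norm_nonneg _))
        rw [norm_smul, Real.norm_of_nonneg hγ]
        exact mul_le_mul_of_nonneg_left (norm_sub_le _ _) hγ
    _ ≤ 2 * (M * (γ * (M + M))) := by gcongr
    _ = 4 * γ * M ^ 2 := by ring

theorem integral_le_of_hasDerivAt_le_neg_mul {E u E' : ℝ → ℝ} {T t c B : ℝ} (hc : 0 < c)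
    (hE : ∀ s ≥ T, HasDerivAt E (E' s) s) (hE' : ∀ s ≥ T, E' s ≤ -(c * u s))
    (hu : ContinuousOn u (Ici T)) (hB : B ≤ E t) (ht : T ≤ t) :
    ∫ s in T..t, u s ≤ (E T - B) / c := by
  have hint := intervalIntegral.integral_le_sub_of_hasDeriv_right_of_le (φ := fun s => c * u s)
    (g := fun s => -E s) ht
    (fun s hs => (hE s hs.1).continuousAt.continuousWithinAt.neg)
    (fun s hs => (hE s hs.1.le).neg.hasDerivWithinAt)
    ((continuousOn_const.mul hu).mono Icc_subset_Ici_self |>.integrableOn_Icc)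
    (fun s hs => le_neg.2 (hE' s hs.1.le))
  rw [intervalIntegral.integral_const_mul] at hint
  rw [le_div_iff₀ hc]
  linarith

theorem tendsto_zero_of_lipschitzOnWith_of_integral_le {u : ℝ → ℝ} {T B : ℝ} {L : NNReal}
    (hu : ∀ t ≥ T, 0 ≤ u t) (hlip : LipschitzOnWith L u (Ici T))
    (hint : ∀ t ≥ T, ∫ s in T..t, u s ≤ B) : Tendsto u atTop (𝓝 0) := by
  have hcont := hlip.continuousOn
  have hI : IntegrableOn u (Ioi T) :=
    integrableOn_Ioi_of_intervalIntegral_norm_bounded B T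
      (fun t => (hcont.mono Icc_subset_Ici_self).integrableOn_Icc.mono_set Ioc_subset_Icc_self)
      tendsto_id (by
        filter_upwards [eventually_ge_atTop T] with t ht
        refine le_trans (le_of_eq ?_) (hint t ht)
        refine intervalIntegral.integral_congr fun s hs => ?_
        rw [id, uIcc_of_le ht] at hs
        exact Real.norm_of_nonneg (hu s hs.1))
  have hψ : Tendsto (fun t => ∫ s in T..t, u s) atTop (𝓝 (∫ s in Ioi T, u s)) :=
    intervalIntegral_tendsto_integral_Ioi T hI tendsto_id
  -- integrals over windows of fixed length `δ` are differences of a convergent primitive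
  have hwindow : ∀ δ ≥ 0, Tendsto (fun t => ∫ s in t..t + δ, u s) atTop (𝓝 0) := by
    intro δ hδ
    have := (hψ.comp (tendsto_atTop_add_const_right _ δ tendsto_id)).sub hψ
    simp only [Function.comp_def, id, sub_self] at this
    refine this.congr' ?_
    filter_upwards [eventually_ge_atTop T] with t ht
    refine intervalIntegral.integral_interval_sub_left ?_ ?_ <;>
      refine (hcont.mono fun s hs => ?_).intervalIntegrable <;>
      rw [uIcc_of_le (by linarith)] at hs
    exacts [hs.1, hs.1]
  -- the Lipschitz bound keeps `u` large on a whole window after any time where it is large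
  have hwindow_ge : ∀ t ≥ T, ∀ δ ≥ 0, δ * (u t - L * δ) ≤ ∫ s in t..t + δ, u s := by
    intro t ht δ hδ
    have hlow : ∀ s ∈ Icc t (t + δ), u t - L * δ ≤ u s := fun s hs => by
      have := hlip.dist_le_mul t ht s (ht.trans hs.1)
      rw [Real.dist_eq, Real.dist_eq, abs_sub_comm t, abs_of_nonneg (sub_nonneg.2 hs.1)] at this
      nlinarith [le_abs_self (u t - u s), hs.2, L.coe_nonneg]
    have := intervalIntegral.integral_mono_on (μ := volume) (by linarith) intervalIntegrable_const
      (hcont.mono fun s hs => ?_).intervalIntegrable hlow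
    · simp only [intervalIntegral.integral_const, add_sub_cancel_left, smul_eq_mul] at this
      exact this
    · rw [uIcc_of_le (by linarith)] at hs
      exact ht.trans hs.1
  refine tendsto_order.2 ⟨fun a ha => ?_, fun ε hε => ?_⟩
  · filter_upwards [eventually_ge_atTop T] with t ht using ha.trans_le (hu t ht)
  set δ := ε / (2 * (L + 1))
  have hδ : 0 < δ := by positivity
  have hLδ : L * δ < ε / 2 := by
    rw [show (L : ℝ) * δ = ε / 2 * (L / (L + 1)) by simp only [δ]; field_simp]
    exact mul_lt_of_lt_one_right (by linarith) ((div_lt_one (by positivity)).2 (by linarith))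
  filter_upwards [eventually_ge_atTop T,
    (hwindow δ hδ.le).eventually (gt_mem_nhds (by positivity : 0 < δ * (ε / 2)))]
    with t ht hsmall
  nlinarith [hwindow_ge t ht δ hδ.le]
theorem HasDerivAt.piLp_apply {ι : Type*} [Fintype ι] {u : ℝ → EuclideanSpace ℝ ι}
    {u' : EuclideanSpace ℝ ι} {t : ℝ} (h : HasDerivAt u u' t) (i : ι) :
    HasDerivAt (fun s => u s i) (u' i) t :=
  (PiLp.hasFDerivAt_apply 2 (u t) i).comp_hasDerivAt t h

theorem norm_vsq_le {d : ℕ} (w : EuclideanSpace ℝ (Fin d)) : ‖vsq d w‖ ≤ ‖w‖ ^ 2 := by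
  rw [← pow_le_pow_iff_left₀ (norm_nonneg _) (by positivity) two_ne_zero,
    EuclideanSpace.real_norm_sq_eq, EuclideanSpace.real_norm_sq_eq]
  exact Finset.sum_sq_le_sq_sum_of_nonneg fun i _ => sq_nonneg (w i)

noncomputable def biasCorrection (γ t : ℝ) : ℝ := 1 - Real.exp (-(1 - γ) * t)

section BiasCorrection

variable {γ t : ℝ}

theorem hasDerivAt_biasCorrection (γ t : ℝ) :
    HasDerivAt (biasCorrection γ) ((1 - γ) * Real.exp (-(1 - γ) * t)) t :=
  ((((hasDerivAt_id t).const_mul (-(1 - γ))).exp).const_sub 1).congr_deriv (by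
    simp only [id]; ring)

theorem biasCorrection_pos (hγ : γ < 1) (ht : 0 < t) : 0 < biasCorrection γ t := by
  have : Real.exp (-(1 - γ) * t) < 1 := Real.exp_lt_one_iff.2 (by nlinarith)
  simp only [biasCorrection]; linarith

theorem biasCorrection_le_one : biasCorrection γ t ≤ 1 := by
  simp only [biasCorrection, sub_le_self_iff]; positivity

theorem monotone_biasCorrection (hγ : γ ≤ 1) : Monotone (biasCorrection γ) := fun s t hst => by
  simp only [biasCorrection, sub_le_sub_iff_left, Real.exp_le_exp]
  nlinarith

theorem tendsto_biasCorrection (hγ : γ < 1) : Tendsto (biasCorrection γ) atTop (𝓝 1) := by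
  unfold biasCorrection
  have : Tendsto (fun t => Real.exp (-(1 - γ) * t)) atTop (𝓝 0) :=
    Real.tendsto_exp_atBot.comp (tendsto_id.const_mul_atTop_of_neg (by linarith))
  simpa only [sub_zero] using this.const_sub (1 : ℝ)

end BiasCorrection

noncomputable def adamDenom (α β ε t r : ℝ) : ℝ :=
  biasCorrection α t * (√(r / biasCorrection β t) + ε)

section AdamDenom

variable {α β ε t r : ℝ}

theorem adamG_apply (d : ℕ) (m v : EuclideanSpace ℝ (Fin d)) (i : Fin d) :
    adamG α β ε d t m v i = m i / adamDenom α β ε t (v i) :=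
  div_div _ _ _

theorem adamDenom_pos (hα : α < 1) (hε : 0 < ε) (ht : 0 < t) : 0 < adamDenom α β ε t r :=
  mul_pos (biasCorrection_pos hα ht) (by positivity)

theorem adamDenom_le {T V : ℝ} (hβ : β < 1) (hε : 0 ≤ ε) (hT : 0 < T) (hTt : T ≤ t)
    (hV : 0 ≤ V) (hr : r ≤ V) :
    adamDenom α β ε t r ≤ √(V / biasCorrection β T) + ε := by
  have hbT := biasCorrection_pos hβ hT
  have hbt : biasCorrection β T ≤ biasCorrection β t := monotone_biasCorrection hβ.le hTt
  have hsqrt : √(r / biasCorrection β t) ≤ √(V / biasCorrection β T) :=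
    Real.sqrt_le_sqrt ((div_le_div_of_nonneg_right hr (hbT.trans_le hbt).le).trans
      (div_le_div_of_nonneg_left hV hbT hbt))
  calc adamDenom α β ε t r ≤ 1 * (√(r / biasCorrection β t) + ε) :=
        mul_le_mul_of_nonneg_right biasCorrection_le_one (by positivity)
    _ ≤ √(V / biasCorrection β T) + ε := by linarith

theorem HasDerivAt.adamDenom_ge {v : ℝ → ℝ} {g : ℝ} (hα : α < 1) (hβ : β < 1) (hε : 0 ≤ ε)
    (ht : 0 < t) (hv : HasDerivAt v ((1 - β) * (g ^ 2 - v t)) t) (hvt : 0 < v t) :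
    ∃ D', HasDerivAt (fun s => adamDenom α β ε s (v s)) D' t ∧
      -((1 - β) / (2 * biasCorrection β t)) * adamDenom α β ε t (v t) ≤ D' := by
  set a := biasCorrection α t
  set b := biasCorrection β t
  have ha : 0 < a := biasCorrection_pos hα ht
  have hb : 0 < b := biasCorrection_pos hβ ht
  have hβ' : 0 < 1 - β := by linarith
  have hq : HasDerivAt (fun s => v s / biasCorrection β s)
      ((1 - β) * (g ^ 2 * b - v t) / b ^ 2) t :=
    (hv.div (hasDerivAt_biasCorrection β t) hb.ne').congr_deriv (by
      simp only [biasCorrection, b] at *; ring)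
  set s := √(v t / b)
  have hs : 0 < s := Real.sqrt_pos.2 (div_pos hvt hb)
  have hss : v t = b * s ^ 2 := by
    rw [Real.sq_sqrt (div_pos hvt hb).le]; field_simp
  have hsd := hq.sqrt (div_pos hvt hb).ne'
  refine ⟨_, (hasDerivAt_biasCorrection α t).mul (hsd.add_const ε), ?_⟩
  -- the relative decay of `v / b` is at most `(1 - β) / b`, and `√` halves it
  have hs' : -((1 - β) / (2 * b)) * s ≤ (1 - β) * (g ^ 2 * b - v t) / b ^ 2 / (2 * s) := by
    rw [hss, div_div, le_div_iff₀ (by positivity)]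
    have : 0 ≤ (1 - β) * g ^ 2 * b ^ 3 * s := by positivity
    field_simp
    nlinarith
  have ha' : 0 ≤ (1 - α) * Real.exp (-(1 - α) * t) * (s + ε) := by
    have : 0 < 1 - α := by linarith
    positivity
  have : 0 ≤ (1 - β) / (2 * b) * a * ε := by positivity
  rw [show adamDenom α β ε t (v t) = a * (s + ε) from rfl]
  nlinarith [mul_le_mul_of_nonneg_left hs' ha.le]

end AdamDenom

theorem adamEnergy_summand_deriv_le {α η κ g m D D' : ℝ} (hα : α < 1) (hη : 0 ≤ η) (hD : 0 < D)
    (hD' : -κ * D ≤ D') :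
    -η * (g * (m / D)) +
        η / (2 * (1 - α)) * ((2 * m * ((1 - α) * (g - m)) * D - m ^ 2 * D') / D ^ 2) ≤
      -(η * (1 - κ / (2 * (1 - α)))) * (m ^ 2 / D) := by
  have hα' : 0 < 1 - α := by linarith
  -- the cross terms `η g m / D` cancel
  have hsplit : -η * (g * (m / D)) +
        η / (2 * (1 - α)) * ((2 * m * ((1 - α) * (g - m)) * D - m ^ 2 * D') / D ^ 2) =
      -(η * (m ^ 2 / D)) + η / (2 * (1 - α)) * (m ^ 2 / D ^ 2) * -D' := by
    field_simp; ring
  have hD'' : η / (2 * (1 - α)) * (m ^ 2 / D ^ 2) * -D' ≤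
      η / (2 * (1 - α)) * (m ^ 2 / D ^ 2) * (κ * D) :=
    mul_le_mul_of_nonneg_left (by linarith) (by positivity)
  rw [hsplit]
  calc _ ≤ -(η * (m ^ 2 / D)) + η / (2 * (1 - α)) * (m ^ 2 / D ^ 2) * (κ * D) := by linarith
    _ = _ := by field_simp; ring

theorem tendsto_adamG_zero {d : ℕ} {α β ε : ℝ} {m v : ℝ → EuclideanSpace ℝ (Fin d)}
    (hα : α < 1) (hε : 0 < ε) (hm : Tendsto m atTop (𝓝 0)) :
    Tendsto (fun t => adamG α β ε d t (m t) (v t)) atTop (𝓝 0) := by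
  have hb : 0 < biasCorrection α 1 := biasCorrection_pos hα one_pos
  refine ((PiLp.continuous_toLp 2 _).tendsto 0).comp (tendsto_pi_nhds.2 fun i => ?_)
  have hmi : Tendsto (fun t => m t i) atTop (𝓝 0) := by
    simpa [Function.comp_def] using ((PiLp.continuous_apply 2 _ i).tendsto 0).comp hm
  refine squeeze_zero_norm' ?_ ((hmi.norm.div_const (biasCorrection α 1 * ε)).trans (by simp))
  filter_upwards [eventually_ge_atTop 1] with t ht
  have hD : biasCorrection α 1 * ε ≤ adamDenom α β ε t (v t i) :=
    mul_le_mul (monotone_biasCorrection hα.le ht) (by simp) hε.le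
      (biasCorrection_pos hα (by linarith)).le
  change ‖adamG α β ε d t (m t) (v t) i‖ ≤ _
  rw [adamG_apply, norm_div, Real.norm_of_nonneg (adamDenom_pos hα hε (by linarith)).le]
  exact div_le_div_of_nonneg_left (norm_nonneg _) (by positivity) hD

section AdamTrajectory

variable {d : ℕ} {α β ε η : ℝ} {f : EuclideanSpace ℝ (Fin d) → ℝ}
  {x m v : ℝ → EuclideanSpace ℝ (Fin d)}

structure IsAdamTrajectory (α β ε η : ℝ) (f : EuclideanSpace ℝ (Fin d) → ℝ)
    (x m v : ℝ → EuclideanSpace ℝ (Fin d)) : Prop where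
  hasDerivAt_m : ∀ t > (0 : ℝ), HasDerivAt m ((1 - α) • (gradient f (x t) - m t)) t
  hasDerivAt_v : ∀ t > (0 : ℝ), HasDerivAt v ((1 - β) • (vsq d (gradient f (x t)) - v t)) t
  hasDerivAt_x : ∀ t > (0 : ℝ), HasDerivAt x ((-η) • adamG α β ε d t (m t) (v t)) t

/-- The Lyapunov function `f(x) + η / (2(1 - α)) ⟪m, g_t(m, v)⟫`. -/
noncomputable def adamEnergy (α β ε η : ℝ) (f : EuclideanSpace ℝ (Fin d) → ℝ)
    (x m v : ℝ → EuclideanSpace ℝ (Fin d)) (t : ℝ) : ℝ :=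
  f (x t) + η / (2 * (1 - α)) * ∑ i, m t i ^ 2 / adamDenom α β ε t (v t i)

theorem adamEnergy_ge (hα : α < 1) (hε : 0 < ε) (hη : 0 ≤ η) {t : ℝ} (ht : 0 < t) :
    f (x t) ≤ adamEnergy α β ε η f x m v t := by
  have : 0 < 1 - α := by linarith
  have : 0 ≤ ∑ i, m t i ^ 2 / adamDenom α β ε t (v t i) :=
    Finset.sum_nonneg fun i _ => div_nonneg (sq_nonneg _) (adamDenom_pos hα hε ht).le
  unfold adamEnergy
  have : 0 ≤ η / (2 * (1 - α)) := by positivity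
  nlinarith

namespace IsAdamTrajectory

theorem hasDerivAt_energy_le (h : IsAdamTrajectory α β ε η f x m v) {t : ℝ}
    (hf : DifferentiableAt ℝ f (x t)) (hα : α < 1) (hβ : β < 1) (hε : 0 < ε) (hη : 0 ≤ η)
    (ht : 0 < t) (hvt : ∀ i, 0 < v t i) :
    ∃ e, HasDerivAt (adamEnergy α β ε η f x m v) e t ∧
      e ≤ -(η * (1 - (1 - β) / (4 * (1 - α) * biasCorrection β t))) *
        ∑ i, m t i ^ 2 / adamDenom α β ε t (v t i) := by
  set p := gradient f (x t)
  set D := fun s i => adamDenom α β ε s (v s i)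
  have hDpos : ∀ i, 0 < D t i := fun i => adamDenom_pos hα hε ht
  choose D' hD hD' using fun i =>
    HasDerivAt.adamDenom_ge (g := p i) hα hβ hε.le ht ((h.hasDerivAt_v t ht).piLp_apply i) (hvt i)
  have hterm : ∀ i, HasDerivAt (fun s => m s i ^ 2 / D s i)
      ((2 * m t i * ((1 - α) * (p i - m t i)) * D t i - m t i ^ 2 * D' i) / D t i ^ 2) t :=
    fun i => (((h.hasDerivAt_m t ht).piLp_apply i).pow 2 |>.div (hD i) (hDpos i).ne').congr_deriv
      (by simp only [Nat.cast_ofNat, Nat.add_one_sub_one, pow_one, PiLp.smul_apply, PiLp.sub_apply,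
        smul_eq_mul, Pi.pow_apply, p]; ring)
  have hfx : HasDerivAt (fun s => f (x s)) ⟪p, (-η) • adamG α β ε d t (m t) (v t)⟫ t :=
    hf.hasGradientAt.hasFDerivAt.comp_hasDerivAt t (h.hasDerivAt_x t ht)
  refine ⟨_, hfx.add ((HasDerivAt.fun_sum fun i _ => hterm i).const_mul _), ?_⟩
  have hκ : (1 - β) / (2 * biasCorrection β t) / (2 * (1 - α)) =
      (1 - β) / (4 * (1 - α) * biasCorrection β t) := by
    rw [div_div]; ring_nf
  simp only [PiLp.inner_apply, PiLp.smul_apply, adamG_apply, smul_eq_mul,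
    RCLike.inner_apply, conj_trivial, Finset.mul_sum, ← Finset.sum_add_distrib]
  refine Finset.sum_le_sum fun i _ => ?_
  have := adamEnergy_summand_deriv_le (g := p i) (m := m t i) hα hη (hDpos i) (hD' i)
  rw [hκ] at this
  linarith [show -η * (m t i / D t i) * p i = -η * (p i * (m t i / D t i)) by ring]

theorem exists_energy_dissipation (h : IsAdamTrajectory α β ε η f x m v)
    (hf : Differentiable ℝ f) (hα : α < 1) (hβ : β < 1) (hcond : 4 * α - β < 3) (hε : 0 < ε)
    (hη : 0 < η) (hvpos : ∀ t > (0 : ℝ), ∀ i, 0 < v t i) {G : ℝ}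
    (hG : ∀ t ≥ (0 : ℝ), ‖gradient f (x t)‖ ≤ G) :
    ∃ T > 0, ∃ c > 0, ∀ t ≥ T, ∃ e, HasDerivAt (adamEnergy α β ε η f x m v) e t ∧
      e ≤ -(c * ‖m t‖ ^ 2) := by
  have hα' : 0 < 1 - α := by linarith
  -- `4α - β < 3` makes the rate `1 - (1 - β) / (4(1 - α) b(t))` eventually positive
  have hκ : (1 - β) / (4 * (1 - α)) < 1 := by rw [div_lt_one (by positivity)]; linarith
  obtain ⟨T, hκT, hT⟩ := (((tendsto_biasCorrection hβ).eventually (lt_mem_nhds hκ)).and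
    (eventually_gt_atTop 0)).exists
  have hbT := biasCorrection_pos hβ hT
  set V := max ‖v T‖ (G ^ 2)
  have hV : 0 ≤ V := (norm_nonneg _).trans (le_max_left _ _)
  have hvV : ∀ t ≥ T, ∀ i, v t i ≤ V := fun t ht i =>
    (Real.le_norm_self _).trans <| (PiLp.norm_apply_le _ i).trans <|
      norm_le_max_of_hasDerivAt_smul_sub (by linarith)
        (fun s hs => h.hasDerivAt_v s (hT.trans_le hs))
        (fun s hs => (norm_vsq_le _).trans (pow_le_pow_left₀ (norm_nonneg _)
          (hG s (hT.le.trans hs)) 2)) ht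
  set Q := √(V / biasCorrection β T) + ε
  set θ := 1 - (1 - β) / (4 * (1 - α) * biasCorrection β T)
  have hθ : 0 < θ := by
    rw [sub_pos, div_lt_one (by positivity)]
    rwa [div_lt_iff₀ (by positivity), mul_comm] at hκT
  refine ⟨T, hT, η * θ / Q, by positivity, fun t ht => ?_⟩
  have htpos := hT.trans_le ht
  obtain ⟨e, he, hle⟩ := h.hasDerivAt_energy_le hf.differentiableAt hα hβ hε hη.le htpos
    (hvpos t htpos)
  refine ⟨e, he, hle.trans ?_⟩
  have hrate : θ ≤ 1 - (1 - β) / (4 * (1 - α) * biasCorrection β t) :=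
    sub_le_sub_left (div_le_div_of_nonneg_left (by linarith) (by positivity)
      (by gcongr; exact monotone_biasCorrection hβ.le ht)) 1
  have hsum : ‖m t‖ ^ 2 / Q ≤ ∑ i, m t i ^ 2 / adamDenom α β ε t (v t i) := by
    rw [EuclideanSpace.real_norm_sq_eq, Finset.sum_div]
    exact Finset.sum_le_sum fun i _ => div_le_div_of_nonneg_left (sq_nonneg _)
      (adamDenom_pos hα hε htpos) (adamDenom_le hβ hε.le hT ht hV (hvV t ht i))
  have hQ : 0 ≤ ‖m t‖ ^ 2 / Q := by positivity
  calc _ ≤ -(η * θ) * ∑ i, m t i ^ 2 / adamDenom α β ε t (v t i) := by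
        gcongr
        exact hQ.trans hsum
    _ ≤ -(η * θ) * (‖m t‖ ^ 2 / Q) := by
        rw [neg_mul, neg_mul, neg_le_neg_iff]
        gcongr
    _ = _ := by ring

end IsAdamTrajectory

end AdamTrajectory

theorem adam_first_moment_vanishes_general
    (d : ℕ) (α β ε η : ℝ)
    (hα : α ∈ Set.Ico (0 : ℝ) 1) (hβ : β ∈ Set.Ico (0 : ℝ) 1) (hε : 0 < ε) (hη : 0 < η)
    (hcond : 4 * α - β < 3)
    (f : EuclideanSpace ℝ (Fin d) → ℝ) (hf : ContDiff ℝ 1 f)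
    (Flb : ℝ) (hFlb : ∀ y, Flb ≤ f y)
    (x m v : ℝ → EuclideanSpace ℝ (Fin d))
    (hvpos : ∀ t > (0 : ℝ), ∀ i, 0 < v t i)
    (hm : ∀ t > (0 : ℝ), HasDerivAt m ((1 - α) • (gradient f (x t) - m t)) t)
    (hv : ∀ t > (0 : ℝ), HasDerivAt v ((1 - β) • (vsq d (gradient f (x t)) - v t)) t)
    (hx : ∀ t > (0 : ℝ), HasDerivAt x ((-η) • adamG α β ε d t (m t) (v t)) t)
    (G : ℝ) (hG : ∀ t ≥ (0 : ℝ), ‖gradient f (x t)‖ ≤ G) :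
    Tendsto m atTop (nhds 0) ∧
    Tendsto (fun t => (-η) • adamG α β ε d t (m t) (v t)) atTop
      (nhds (0 : EuclideanSpace ℝ (Fin d))) := by
  have hsol : IsAdamTrajectory α β ε η f x m v := ⟨hm, hv, hx⟩
  obtain ⟨T, hT, c, hc, hdiss⟩ := hsol.exists_energy_dissipation (hf.differentiable one_ne_zero)
    hα.2 hβ.2 hcond hε hη hvpos hG
  choose! E' hE' hE'_le using hdiss
  obtain ⟨L, hL⟩ := exists_lipschitzOnWith_norm_sq_of_hasDerivAt_smul_sub (sub_nonneg.2 hα.2.le)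
    (fun s hs => hm s (hT.trans_le hs)) (fun s hs => hG s (hT.le.trans hs))
  have hm_sq : Tendsto (fun t => ‖m t‖ ^ 2) atTop (𝓝 0) :=
    tendsto_zero_of_lipschitzOnWith_of_integral_le (fun t _ => by positivity) hL fun t ht =>
      integral_le_of_hasDerivAt_le_neg_mul hc hE' hE'_le hL.continuousOn
        ((hFlb (x t)).trans (adamEnergy_ge hα.2 hε hη.le (hT.trans_le ht))) ht
  have hm_lim : Tendsto m atTop (𝓝 0) := by
    rw [tendsto_zero_iff_norm_tendsto_zero]
    simpa using hm_sq.sqrt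
  exact ⟨hm_lim, by simpa using (tendsto_adamG_zero hα.2 hε hm_lim).const_smul (-η)⟩

/-- **Vanishing of the first-moment estimate** (the Dirac-measure instance of the step
`lim_{t→∞} ∫‖m‖² dρ_t = 0` in the proof of Theorem 1). Let `f` be `C¹` and bounded below,
`4α − β < 3`, and let `(x, m, v)` be a solution of the Adam ODE system on `[0,∞)` with
initial condition `(x₀, 0, 0)`, differentiable on `(0,∞)`, with `‖∇f(x(t))‖` uniformly
bounded and `v(t)` entrywise strictly positive for `t > 0`. Then `m(t) → 0` and hence
`ẋ(t) = −η g_t(m(t), v(t)) → 0` as `t → ∞`. -/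
theorem adam_first_moment_vanishes
    (d : ℕ) (α β ε η : ℝ)
    (hα : α ∈ Set.Ico (0 : ℝ) 1) (hβ : β ∈ Set.Ico (0 : ℝ) 1) (hε : 0 < ε) (hη : 0 < η)
    (hcond : 4 * α - β < 3)
    (f : EuclideanSpace ℝ (Fin d) → ℝ) (hf : ContDiff ℝ 1 f)
    (Flb : ℝ) (hFlb : ∀ y, Flb ≤ f y)
    (x m v : ℝ → EuclideanSpace ℝ (Fin d)) (x₀ : EuclideanSpace ℝ (Fin d))
    (hx0 : x 0 = x₀) (hm0 : m 0 = 0) (hv0 : v 0 = 0)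
    (hcx : ContinuousOn x (Set.Ici 0)) (hcm : ContinuousOn m (Set.Ici 0))
    (hcv : ContinuousOn v (Set.Ici 0))
    (hvpos : ∀ t > (0 : ℝ), ∀ i, 0 < v t i)
    (hm : ∀ t > (0 : ℝ), HasDerivAt m ((1 - α) • (gradient f (x t) - m t)) t)
    (hv : ∀ t > (0 : ℝ), HasDerivAt v ((1 - β) • (vsq d (gradient f (x t)) - v t)) t)
    (hx : ∀ t > (0 : ℝ), HasDerivAt x ((-η) • adamG α β ε d t (m t) (v t)) t)
    (G : ℝ) (hG : ∀ t ≥ (0 : ℝ), ‖gradient f (x t)‖ ≤ G) :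
    Tendsto m atTop (nhds 0) ∧
    Tendsto (fun t => (-η) • adamG α β ε d t (m t) (v t)) atTop
      (nhds (0 : EuclideanSpace ℝ (Fin d))) :=
  adam_first_moment_vanishes_general d α β ε η hα hβ hε hη hcond f hf Flb hFlb x m v hvpos hm hv hx
    G hG
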